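/- arXiv:1709.09867 — 2 statements merged into one kernel-verified Lean document; each statement's English description precedes it below -/
import Mathlib

section
/- Let G be a finite connected graph, α ≥ p > 1, and g,h:V→ℝ positive. Then there exist a function u:V→ℝ with u>0 on V and a constant λ>0 such that −Δ_p u + g u^{p−1} = λ h u^{α−1} on V and ∑_{x∈V} μ(x) h(x) u(x)^α = 1. -/
/-!
Minimize `E(u) = ½ ∑_x ∑_{y ∼ x} w_{xy} |u(y) - u(x)|^p + ∑_x μ g |u|^p` on the compact set
`N(u) = ∑_x μ h |u|^α = 1`; since `E(|u|) ≤ E(u)` there is a nonnegative minimizer `u`. As `E` is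
`p`-homogeneous and `N` is `α`-homogeneous, `u` also minimizes `E(v) / N(v)^{p/α}` over all `v` with
`N(v) > 0`, so varying `u` at a single vertex gives the Euler–Lagrange equation with multiplier
`λ = E(u) > 0`. At a zero of `u` the equation forces `Δ_p u = 0`, which for `u ≥ 0` makes every
neighbour vanish too; by connectedness, `u > 0`.
-/
open Finset Filter Topology Pointwise

noncomputable def plap {V : Type} [Fintype V] (G : SimpleGraph V) [DecidableRel G.Adj]
    (μ : V → ℝ) (w : V → V → ℝ) (p : ℝ) (f : V → ℝ) (x : V) : ℝ :=
  (μ x)⁻¹ * ∑ y ∈ G.neighborFinset x, w x y * (|f y - f x| ^ (p - 2) * (f y - f x))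

noncomputable def Sgn (t : ℝ) : Set ℝ :=
  if t > 0 then {1} else if t < 0 then {-1} else Set.Icc (-1) 1

noncomputable def onelap {V : Type} [Fintype V] (G : SimpleGraph V) [DecidableRel G.Adj]
    (μ : V → ℝ) (w : V → V → ℝ) (u : V → ℝ) (x : V) : Set ℝ :=
  (μ x)⁻¹ • ∑ y ∈ G.neighborFinset x, w x y • Sgn (u y - u x)

noncomputable def signedPow (q s : ℝ) : ℝ := |s| ^ (q - 2) * s

lemma signedPow_pos {q s : ℝ} (hs : 0 < s) : 0 < signedPow q s :=
  mul_pos (Real.rpow_pos_of_pos (abs_pos.2 hs.ne') _) hs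

lemma signedPow_nonneg {q s : ℝ} (hs : 0 ≤ s) : 0 ≤ signedPow q s :=
  mul_nonneg (Real.rpow_nonneg (abs_nonneg s) _) hs

@[simp] lemma signedPow_zero (q : ℝ) : signedPow q 0 = 0 := by simp [signedPow]

lemma signedPow_neg (q s : ℝ) : signedPow q (-s) = -signedPow q s := by simp [signedPow]

lemma signedPow_of_pos {q s : ℝ} (hs : 0 < s) : signedPow q s = s ^ (q - 1) := by
  rw [signedPow, abs_of_pos hs, ← Real.rpow_add_one hs.ne']
  ring_nf

lemma hasDerivAt_abs_add_mul_rpow {q : ℝ} (hq : 1 < q) (a d : ℝ) :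
    HasDerivAt (fun t : ℝ => |a + t * d| ^ q) (q * signedPow q a * d) 0 := by
  have hline : HasDerivAt (fun t : ℝ => a + t * d) d 0 := by
    simpa using ((hasDerivAt_id (0 : ℝ)).mul_const d).const_add a
  have := (hasDerivAt_abs_rpow (a + 0 * d) hq).comp 0 hline
  rw [zero_mul, add_zero] at this
  exact this.congr_deriv (by simp only [signedPow]; ring)

section WeightedPowSum

variable {V : Type*} [Fintype V]

noncomputable def weightedPowSum (c : V → ℝ) (r : ℝ) (u : V → ℝ) : ℝ := ∑ x, c x * |u x| ^ r

variable {c : V → ℝ} {r : ℝ}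

lemma continuous_weightedPowSum (c : V → ℝ) (hr : 0 ≤ r) : Continuous (weightedPowSum c r) :=
  continuous_finsetSum _ fun x _ =>
    continuous_const.mul ((continuous_apply x).abs.rpow_const fun _ => Or.inr hr)

lemma weightedPowSum_pos (hc : ∀ x, 0 < c x) {u : V → ℝ} {x₀ : V} (hx₀ : u x₀ ≠ 0) :
    0 < weightedPowSum c r u :=
  sum_pos' (fun x _ => mul_nonneg (hc x).le (Real.rpow_nonneg (abs_nonneg _) _))
    ⟨x₀, mem_univ _, mul_pos (hc x₀) (Real.rpow_pos_of_pos (abs_pos.2 hx₀) _)⟩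

@[simp] lemma weightedPowSum_abs (c : V → ℝ) (r : ℝ) (u : V → ℝ) :
    weightedPowSum c r |u| = weightedPowSum c r u := by
  simp [weightedPowSum]

lemma weightedPowSum_smul (c : V → ℝ) (r a : ℝ) (u : V → ℝ) :
    weightedPowSum c r (a • u) = |a| ^ r * weightedPowSum c r u := by
  simp only [weightedPowSum, mul_sum, Pi.smul_apply, smul_eq_mul, abs_mul,
    Real.mul_rpow (abs_nonneg a) (abs_nonneg _)]
  exact sum_congr rfl fun x _ => by ring

lemma abs_le_of_weightedPowSum_le_one (hc : ∀ x, 0 < c x) (hr : 0 < r) {u : V → ℝ}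
    (hu : weightedPowSum c r u ≤ 1) (x : V) : |u x| ≤ (c x)⁻¹ ^ r⁻¹ := by
  have hterm : c x * |u x| ^ r ≤ 1 :=
    (single_le_sum (fun y _ => mul_nonneg (hc y).le (Real.rpow_nonneg (abs_nonneg (u y)) r))
      (mem_univ x)).trans hu
  rw [Real.le_rpow_inv_iff_of_pos (abs_nonneg _) (inv_nonneg.2 (hc x).le) hr, ← one_div,
    le_div_iff₀' (hc x)]
  exact hterm

lemma isCompact_weightedPowSum_eq_one (hc : ∀ x, 0 < c x) (hr : 0 < r) :
    IsCompact {u : V → ℝ | weightedPowSum c r u = 1} :=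
  (isCompact_univ_pi fun x => isCompact_Icc (a := -((c x)⁻¹ ^ r⁻¹))).of_isClosed_subset
    (isClosed_eq (continuous_weightedPowSum c hr.le) continuous_const)
    fun _ hu x _ => abs_le.1 (abs_le_of_weightedPowSum_le_one hc hr hu.le x)

lemma hasDerivAt_weightedPowSum (c : V → ℝ) (hr : 1 < r) (u d : V → ℝ) :
    HasDerivAt (fun t : ℝ => weightedPowSum c r (u + t • d))
      (r * ∑ x, d x * (c x * signedPow r (u x))) 0 := by
  simp only [weightedPowSum, Pi.add_apply, Pi.smul_apply, smul_eq_mul, mul_sum]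
  refine HasDerivAt.fun_sum fun x _ => ?_
  exact ((hasDerivAt_abs_add_mul_rpow hr (u x) (d x)).const_mul (c x)).congr_deriv (by ring)

end WeightedPowSum

section GraphEnergy

variable {V : Type*} [Fintype V] (G : SimpleGraph V) [DecidableRel G.Adj]

noncomputable def dirichletEnergy (w : V → V → ℝ) (p : ℝ) (u : V → ℝ) : ℝ :=
  ∑ x, ∑ y ∈ G.neighborFinset x, w x y * |u y - u x| ^ p

variable {G} {w : V → V → ℝ} {p : ℝ}

lemma sum_sum_neighborFinset_comm {M : Type*} [AddCommMonoid M] (f : V → V → M) :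
    ∑ x, ∑ y ∈ G.neighborFinset x, f x y = ∑ x, ∑ y ∈ G.neighborFinset x, f y x := by
  simp only [SimpleGraph.neighborFinset_eq_filter, sum_filter]
  rw [sum_comm]
  simp only [SimpleGraph.adj_comm]

lemma continuous_dirichletEnergy (hp : 0 ≤ p) : Continuous (dirichletEnergy G w p) :=
  continuous_finsetSum _ fun x _ => continuous_finsetSum _ fun y _ => continuous_const.mul
    (((continuous_apply y).sub (continuous_apply x)).abs.rpow_const fun _ => Or.inr hp)

lemma dirichletEnergy_nonneg (hw : ∀ x y, G.Adj x y → 0 ≤ w x y) (u : V → ℝ) :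
    0 ≤ dirichletEnergy G w p u :=
  sum_nonneg fun x _ => sum_nonneg fun y hy =>
    mul_nonneg (hw x y ((G.mem_neighborFinset x y).1 hy)) (Real.rpow_nonneg (abs_nonneg _) _)

lemma dirichletEnergy_smul (a : ℝ) (u : V → ℝ) :
    dirichletEnergy G w p (a • u) = |a| ^ p * dirichletEnergy G w p u := by
  simp only [dirichletEnergy, mul_sum, Pi.smul_apply, smul_eq_mul, ← mul_sub, abs_mul,
    Real.mul_rpow (abs_nonneg a) (abs_nonneg _)]
  exact sum_congr rfl fun x _ => sum_congr rfl fun y _ => by ring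

lemma dirichletEnergy_abs_le (hw : ∀ x y, G.Adj x y → 0 ≤ w x y) (hp : 0 ≤ p) (u : V → ℝ) :
    dirichletEnergy G w p |u| ≤ dirichletEnergy G w p u :=
  sum_le_sum fun x _ => sum_le_sum fun y hy =>
    mul_le_mul_of_nonneg_left
      (Real.rpow_le_rpow (abs_nonneg _) (abs_abs_sub_abs_le_abs_sub _ _) hp)
      (hw x y ((G.mem_neighborFinset x y).1 hy))

lemma hasDerivAt_dirichletEnergy (hp : 1 < p) (u d : V → ℝ) :
    HasDerivAt (fun t : ℝ => dirichletEnergy G w p (u + t • d))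
      (p * ∑ x, ∑ y ∈ G.neighborFinset x, w x y * signedPow p (u y - u x) * (d y - d x)) 0 := by
  have hdiff : ∀ (t : ℝ) (x y : V), (u + t • d) y - (u + t • d) x = u y - u x + t * (d y - d x) :=
    fun t x y => by simp only [Pi.add_apply, Pi.smul_apply, smul_eq_mul]; ring
  simp only [dirichletEnergy, hdiff, mul_sum]
  refine HasDerivAt.fun_sum fun x _ => HasDerivAt.fun_sum fun y _ => ?_
  exact ((hasDerivAt_abs_add_mul_rpow hp _ _).const_mul (w x y)).congr_deriv (by ring)

/-- Discrete Green formula; the factor `2` appears because each edge is seen from both ends. -/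
lemma sum_sum_neighborFinset_signedPow_mul_sub (hsym : ∀ x y, G.Adj x y → w x y = w y x)
    (u d : V → ℝ) :
    ∑ x, ∑ y ∈ G.neighborFinset x, w x y * signedPow p (u y - u x) * (d y - d x)
      = -2 * ∑ x, d x * ∑ y ∈ G.neighborFinset x, w x y * signedPow p (u y - u x) := by
  have hswap : ∑ x, ∑ y ∈ G.neighborFinset x, w x y * signedPow p (u y - u x) * d y
      = -∑ x, ∑ y ∈ G.neighborFinset x, w x y * signedPow p (u y - u x) * d x := by
    rw [sum_sum_neighborFinset_comm, ← sum_neg_distrib]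
    refine sum_congr rfl fun x _ => ?_
    rw [← sum_neg_distrib]
    refine sum_congr rfl fun y hy => ?_
    rw [hsym y x ((G.mem_neighborFinset x y).1 hy).symm, ← neg_sub (u y), signedPow_neg]
    ring
  have hfactor : ∑ x, d x * ∑ y ∈ G.neighborFinset x, w x y * signedPow p (u y - u x)
      = ∑ x, ∑ y ∈ G.neighborFinset x, w x y * signedPow p (u y - u x) * d x := by
    simp only [mul_sum]
    exact sum_congr rfl fun x _ => sum_congr rfl fun y _ => by ring
  simp only [mul_sub, sum_sub_distrib, hswap, hfactor]
  ring

end GraphEnergy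

section Homogeneous

variable {M : Type*} [AddCommGroup M] [Module ℝ M] {E N : M → ℝ} {p α : ℝ}

lemma apply_rpow_neg_inv_smul_eq_one (hα : α ≠ 0)
    (hN : ∀ (a : ℝ) v, 0 < a → N (a • v) = a ^ α * N v) {v : M} (hv : 0 < N v) :
    N (N v ^ (-α⁻¹) • v) = 1 := by
  rw [hN _ _ (Real.rpow_pos_of_pos hv _), ← Real.rpow_mul hv.le, neg_mul, inv_mul_cancel₀ hα,
    Real.rpow_neg_one, inv_mul_cancel₀ hv.ne']

lemma IsMinOn.mul_rpow_le_of_homogeneous (hα : α ≠ 0)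
    (hE : ∀ (a : ℝ) v, 0 < a → E (a • v) = a ^ p * E v)
    (hN : ∀ (a : ℝ) v, 0 < a → N (a • v) = a ^ α * N v)
    {u : M} (hu : IsMinOn E {v | N v = 1} u) {v : M} (hv : 0 < N v) :
    E u * N v ^ (p / α) ≤ E v := by
  have hmin : E u ≤ N v ^ (-(p / α)) * E v := by
    have : E u ≤ E (N v ^ (-α⁻¹) • v) := hu (apply_rpow_neg_inv_smul_eq_one hα hN hv)
    rwa [hE _ _ (Real.rpow_pos_of_pos hv _), ← Real.rpow_mul hv.le, neg_mul, inv_mul_eq_div] at this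
  calc E u * N v ^ (p / α)
      ≤ N v ^ (-(p / α)) * E v * N v ^ (p / α) :=
        mul_le_mul_of_nonneg_right hmin (Real.rpow_nonneg hv.le _)
    _ = E v := by
      rw [mul_right_comm, ← Real.rpow_add hv, neg_add_cancel, Real.rpow_zero, one_mul]

end Homogeneous

lemma HasDerivAt.eq_mul_of_mul_rpow_le {E N : ℝ → ℝ} {DE DN s : ℝ} (hE : HasDerivAt E DE 0)
    (hN : HasDerivAt N DN 0) (hN0 : N 0 = 1) (hle : ∀ t, 0 < N t → E 0 * N t ^ s ≤ E t) :
    DE = E 0 * s * DN := by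
  have hφ : HasDerivAt (fun t => E t - E 0 * N t ^ s) (DE - E 0 * (DN * s * N 0 ^ (s - 1))) 0 :=
    hE.sub ((hN.rpow_const (Or.inl (by simp [hN0]))).const_mul (E 0))
  have hmin : IsLocalMin (fun t => E t - E 0 * N t ^ s) 0 := by
    have hNpos : ∀ᶠ t in 𝓝 (0 : ℝ), 0 < N t :=
      continuousAt_const.eventually_lt hN.continuousAt (by simp [hN0])
    filter_upwards [hNpos] with t ht
    simpa [hN0] using hle t ht
  have := hmin.hasDerivAt_eq_zero hφ
  rw [hN0, Real.one_rpow] at this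
  linarith

lemma SimpleGraph.Reachable.mem_of_adj_closed {V : Type*} {G : SimpleGraph V} {s : Set V}
    (hs : ∀ a b, G.Adj a b → a ∈ s → b ∈ s) {x y : V} (hxy : G.Reachable x y) (hx : x ∈ s) :
    y ∈ s := by
  obtain ⟨W⟩ := hxy
  induction W with
  | nil => exact hx
  | cons hadj _ ih => exact ih (hs _ _ hadj hx)

section Yamabe

variable {V : Type} [Fintype V] {G : SimpleGraph V} [DecidableRel G.Adj]
  {μ : V → ℝ} {w : V → V → ℝ} {g : V → ℝ} {p : ℝ}

noncomputable def yamabeEnergy (G : SimpleGraph V) [DecidableRel G.Adj] (μ : V → ℝ)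
    (w : V → V → ℝ) (g : V → ℝ) (p : ℝ) (u : V → ℝ) : ℝ :=
  dirichletEnergy G w p u / 2 + weightedPowSum (μ * g) p u

lemma continuous_yamabeEnergy (hp : 0 ≤ p) : Continuous (yamabeEnergy G μ w g p) :=
  ((continuous_dirichletEnergy hp).div_const 2).add (continuous_weightedPowSum _ hp)

lemma yamabeEnergy_smul (a : ℝ) (u : V → ℝ) :
    yamabeEnergy G μ w g p (a • u) = |a| ^ p * yamabeEnergy G μ w g p u := by
  rw [yamabeEnergy, yamabeEnergy, dirichletEnergy_smul, weightedPowSum_smul]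
  ring

lemma yamabeEnergy_abs_le (hw : ∀ x y, G.Adj x y → 0 ≤ w x y) (hp : 0 ≤ p) (u : V → ℝ) :
    yamabeEnergy G μ w g p |u| ≤ yamabeEnergy G μ w g p u := by
  rw [yamabeEnergy, yamabeEnergy, weightedPowSum_abs]
  linarith [dirichletEnergy_abs_le hw hp u]

lemma yamabeEnergy_pos (hw : ∀ x y, G.Adj x y → 0 ≤ w x y) (hμ : ∀ x, 0 < μ x)
    (hg : ∀ x, 0 < g x) {u : V → ℝ} {x₀ : V} (hx₀ : u x₀ ≠ 0) :
    0 < yamabeEnergy G μ w g p u :=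
  add_pos_of_nonneg_of_pos (div_nonneg (dirichletEnergy_nonneg hw u) zero_le_two)
    (weightedPowSum_pos (fun x => mul_pos (hμ x) (hg x)) hx₀)

lemma sum_neighborFinset_signedPow_eq_mul_plap (μ : V → ℝ) {x : V} (hμ : μ x ≠ 0)
    (u : V → ℝ) :
    ∑ y ∈ G.neighborFinset x, w x y * signedPow p (u y - u x) = μ x * plap G μ w p u x := by
  rw [plap, mul_inv_cancel_left₀ hμ]
  rfl

lemma hasDerivAt_yamabeEnergy (hp : 1 < p) (hμ : ∀ x, μ x ≠ 0)
    (hsym : ∀ x y, G.Adj x y → w x y = w y x) (u d : V → ℝ) :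
    HasDerivAt (fun t : ℝ => yamabeEnergy G μ w g p (u + t • d))
      (p * ∑ x, d x * (μ x * (-plap G μ w p u x + g x * signedPow p (u x)))) 0 := by
  refine (((hasDerivAt_dirichletEnergy hp u d).div_const 2).add
    (hasDerivAt_weightedPowSum (μ * g) hp u d)).congr_deriv ?_
  rw [sum_sum_neighborFinset_signedPow_mul_sub hsym]
  simp only [sum_neighborFinset_signedPow_eq_mul_plap μ (hμ _), Pi.mul_apply, mul_add, mul_neg,
    sum_add_distrib, sum_neg_distrib, mul_assoc]
  ring

lemma exists_nonneg_isMinOn_yamabeEnergy [Nonempty V] (hw : ∀ x y, G.Adj x y → 0 ≤ w x y)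
    (hp : 0 ≤ p) {c : V → ℝ} (hc : ∀ x, 0 < c x) {α : ℝ} (hα : 0 < α) :
    ∃ u : V → ℝ, 0 ≤ u ∧ weightedPowSum c α u = 1 ∧
      IsMinOn (yamabeEnergy G μ w g p) {v | weightedPowSum c α v = 1} u := by
  have hnonempty : {v | weightedPowSum c α v = 1}.Nonempty :=
    ⟨_, apply_rpow_neg_inv_smul_eq_one hα.ne'
      (fun a v ha => by rw [weightedPowSum_smul, abs_of_pos ha])
      (weightedPowSum_pos hc (u := 1) (x₀ := Classical.arbitrary V) one_ne_zero)⟩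
  obtain ⟨u, hu, hmin⟩ := (isCompact_weightedPowSum_eq_one hc hα).exists_isMinOn hnonempty
    (continuous_yamabeEnergy hp : Continuous (yamabeEnergy G μ w g p)).continuousOn
  have hu1 : weightedPowSum c α u = 1 := hu
  exact ⟨|u|, abs_nonneg u, by rwa [weightedPowSum_abs],
    fun v hv => (yamabeEnergy_abs_le hw hp u).trans (hmin hv)⟩

lemma neg_plap_add_eq_of_isMinOn {h : V → ℝ} {α : ℝ} (hp : 1 < p) (hα : 1 < α)
    (hμ : ∀ x, μ x ≠ 0) (hsym : ∀ x y, G.Adj x y → w x y = w y x) {u : V → ℝ}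
    (hu1 : weightedPowSum (μ * h) α u = 1)
    (hmin : IsMinOn (yamabeEnergy G μ w g p) {v | weightedPowSum (μ * h) α v = 1} u) (z : V) :
    -plap G μ w p u z + g z * signedPow p (u z)
      = yamabeEnergy G μ w g p u * h z * signedPow α (u z) := by
  classical
  have hα0 : α ≠ 0 := by positivity
  have hquot : ∀ v, 0 < weightedPowSum (μ * h) α v →
      yamabeEnergy G μ w g p u * weightedPowSum (μ * h) α v ^ (p / α) ≤ yamabeEnergy G μ w g p v :=
    fun v hv => hmin.mul_rpow_le_of_homogeneous hα0
      (fun a v ha => by rw [yamabeEnergy_smul, abs_of_pos ha])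
      (fun a v ha => by rw [weightedPowSum_smul, abs_of_pos ha]) hv
  have key := (hasDerivAt_yamabeEnergy (g := g) hp hμ hsym u (Pi.single z 1)
    ).eq_mul_of_mul_rpow_le (hasDerivAt_weightedPowSum (μ * h) hα u (Pi.single z 1))
    (by simpa using hu1) (fun t ht => by simpa using hquot _ ht)
  simp only [Pi.single_apply, ite_mul, one_mul, zero_mul, sum_ite_eq', mem_univ, if_true,
    zero_smul, add_zero, Pi.mul_apply] at key
  refine mul_left_cancel₀ (mul_ne_zero (by positivity : p ≠ 0) (hμ z)) ?_
  linear_combination key + yamabeEnergy G μ w g p u * μ z * h z * signedPow α (u z) *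
    div_mul_cancel₀ p hα0

lemma plap_pos_of_eq_zero {z y : V} (hμ : 0 < μ z) (hw : ∀ x y, G.Adj x y → 0 < w x y)
    {u : V → ℝ} (hu : 0 ≤ u) (hz : u z = 0) (hzy : G.Adj z y) (hy : 0 < u y) :
    0 < plap G μ w p u z := by
  rw [plap, hz]
  simp only [sub_zero]
  exact mul_pos (inv_pos.2 hμ) (sum_pos'
    (fun y' hy' => mul_nonneg (hw z y' ((G.mem_neighborFinset z y').1 hy')).le
      (signedPow_nonneg (hu y')))
    ⟨y, (G.mem_neighborFinset z y).2 hzy, mul_pos (hw z y hzy) (signedPow_pos hy)⟩)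

lemma SimpleGraph.Connected.pos_of_plap_nonpos (hconn : G.Connected) (hμ : ∀ x, 0 < μ x)
    (hw : ∀ x y, G.Adj x y → 0 < w x y) {u : V → ℝ} (hu : 0 ≤ u) (hne : u ≠ 0)
    (hplap : ∀ z, u z = 0 → plap G μ w p u z ≤ 0) (x : V) : 0 < u x := by
  refine (hu x).lt_of_ne fun hx => hne (funext fun y => ?_)
  refine (hconn x y).mem_of_adj_closed (s := {v | u v = 0}) (fun a b hab ha => ?_) hx.symm
  by_contra hb
  exact (hplap a ha).not_gt (plap_pos_of_eq_zero (hμ a) hw hu ha hab ((hu b).lt_of_ne' hb))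

end Yamabe

theorem p_yamabe_solvable {V : Type} [Fintype V] [Nonempty V]
    (G : SimpleGraph V) [DecidableRel G.Adj] (hconn : G.Connected)
    (μ : V → ℝ) (w : V → V → ℝ) (hμ : ∀ x, 0 < μ x)
    (hw : ∀ x y, G.Adj x y → 0 < w x y) (hsym : ∀ x y, G.Adj x y → w x y = w y x)
    (p α : ℝ) (hp : 1 < p) (hpα : p ≤ α)
    (g h : V → ℝ) (hg : ∀ x, 0 < g x) (hh : ∀ x, 0 < h x) :
    ∃ (u : V → ℝ) (lam : ℝ), (∀ x, 0 < u x) ∧ 0 < lam ∧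
      (∀ x, -(plap G μ w p u x) + g x * u x ^ (p - 1) = lam * h x * u x ^ (α - 1)) ∧
      ∑ x, μ x * h x * u x ^ α = 1 := by
  have hα : 1 < α := hp.trans_le hpα
  have hw' : ∀ x y, G.Adj x y → 0 ≤ w x y := fun x y hxy => (hw x y hxy).le
  obtain ⟨u, hu, hu1, hmin⟩ := exists_nonneg_isMinOn_yamabeEnergy (μ := μ) (g := g)
    (c := μ * h) hw' (by positivity) (fun x => mul_pos (hμ x) (hh x)) (by positivity : 0 < α)
  have hEL := neg_plap_add_eq_of_isMinOn hp hα (fun x => (hμ x).ne') hsym hu1 hmin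
  have hne : u ≠ 0 := by
    rintro rfl
    simp [weightedPowSum, Real.zero_rpow (by positivity : α ≠ 0)] at hu1
  have hpos : ∀ x, 0 < u x := hconn.pos_of_plap_nonpos hμ hw hu hne fun z hz => by
    have := hEL z
    rw [hz, signedPow_zero, signedPow_zero] at this
    linarith
  refine ⟨u, yamabeEnergy G μ w g p u, hpos,
    yamabeEnergy_pos hw' hμ hg (hpos (Classical.arbitrary V)).ne', fun x => ?_, ?_⟩
  · simpa only [signedPow_of_pos (hpos x)] using hEL x
  · simpa [weightedPowSum, abs_of_pos (hpos _)] using hu1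
end

section
/- Let G be a finite connected graph, α>1, g,h>0 on V. There exist positive constants c₂ ≤ 1 ≤ c₁ depending only on α, g, h, and G (including μ, w) such that for every p∈(1,α), if u>0 solves −Δ_p u + g u^{p−1} = λ h u^{α−1} with λ>0 and ∑_x μ(x)h(x)u(x)^α = 1, then c₂ ≤ λ ≤ c₁. -/
open Finset Filter Topology Pointwise

/-!
Multiplying the equation by `μ` and summing over `V`, the `p`-Laplacian drops out (its flux
`w x y |u y - u x|^(p-2) (u y - u x)` is antisymmetric), so
`λ = ∑ μ g u^(p-1) / ∑ μ h u^(α-1)`. If `M = max u`, the numerator lies between multiples of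
`M^(p-1)` and the denominator between multiples of `M^(α-1)`, with factors depending only on
`μ, g, h`, so `λ ≍ M^(p-α)`. The normalisation `∑ μ h u^α = 1` pins `M` to an interval `[m, B]`
with `m ≤ 1 ≤ B`, and since `p - α ∈ (1 - α, 0)`, `M^(p-α)` lies in `[B^(1-α), m^(1-α)]` for
every `p`.
-/

lemma sum_sum_eq_zero_of_antisymm {ι M : Type*} [Fintype ι] [AddCommGroup M] [LinearOrder M]
    [IsOrderedAddMonoid M] (F : ι → ι → M) (hF : ∀ x y, F y x = -F x y) :
    ∑ x, ∑ y, F x y = 0 := by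
  refine self_eq_neg.mp ?_
  calc ∑ x, ∑ y, F x y = ∑ y, ∑ x, F x y := sum_comm
    _ = ∑ y, ∑ x, -F y x := sum_congr rfl fun y _ => sum_congr rfl fun x _ => hF y x
    _ = -∑ x, ∑ y, F x y := by simp only [sum_neg_distrib]

lemma sum_mul_plap_eq_zero {V : Type} [Fintype V] (G : SimpleGraph V) [DecidableRel G.Adj]
    (μ : V → ℝ) (w : V → V → ℝ) (hμ : ∀ x, μ x ≠ 0)
    (hsym : ∀ x y, G.Adj x y → w x y = w y x) (p : ℝ) (f : V → ℝ) :
    ∑ x, μ x * plap G μ w p f x = 0 := by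
  let F x y := if G.Adj x y then w x y * (|f y - f x| ^ (p - 2) * (f y - f x)) else 0
  have hF : ∀ x, μ x * plap G μ w p f x = ∑ y, F x y := fun x => by
    rw [plap, mul_inv_cancel_left₀ (hμ x), G.neighborFinset_eq_filter, sum_filter]
  have hanti : ∀ x y, F y x = -F x y := fun x y => by
    by_cases hxy : G.Adj x y
    · simp only [F, if_pos hxy, if_pos hxy.symm, hsym y x hxy.symm, abs_sub_comm (f x)]
      ring
    · simp only [F, if_neg hxy, if_neg (mt G.adj_symm hxy), neg_zero]
  simp only [hF, sum_sum_eq_zero_of_antisymm F hanti]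

lemma sum_mul_rpow_mem_Icc_of_isMax {V : Type} [Fintype V] [Nonempty V] (c u : V → ℝ)
    (hc : ∀ x, 0 ≤ c x) (hu : ∀ x, 0 ≤ u x) {x₀ : V} (hx₀ : ∀ x, u x ≤ u x₀) {q : ℝ} (hq : 0 ≤ q) :
    ∑ x, c x * u x ^ q ∈
      Set.Icc (univ.inf' univ_nonempty c * u x₀ ^ q) ((∑ x, c x) * u x₀ ^ q) := by
  constructor
  · calc univ.inf' univ_nonempty c * u x₀ ^ q ≤ c x₀ * u x₀ ^ q := by
          gcongr
          exacts [Real.rpow_nonneg (hu x₀) q, inf'_le c (mem_univ x₀)]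
      _ ≤ ∑ x, c x * u x ^ q :=
          single_le_sum (fun x _ => mul_nonneg (hc x) (Real.rpow_nonneg (hu x) q)) (mem_univ x₀)
  · rw [sum_mul]
    exact sum_le_sum fun x _ => by gcongr; exacts [hc x, hu x, hx₀ x]

lemma mem_Icc_of_rpow_mem_Icc {M α a b : ℝ} (hM : 0 ≤ M) (hα : 1 ≤ α) (h : M ^ α ∈ Set.Icc a b) :
    M ∈ Set.Icc (min 1 a) (max 1 b) := by
  constructor
  · rcases le_total 1 M with hM1 | hM1
    · exact min_le_of_left_le hM1
    · exact min_le_of_right_le (h.1.trans (Real.rpow_le_self_of_le_one hM hM1 hα))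
  · rcases le_total 1 M with hM1 | hM1
    · exact le_max_of_le_right ((Real.self_le_rpow_of_one_le hM1 hα).trans h.2)
    · exact le_max_of_le_left hM1

lemma rpow_mem_Icc_of_mem_Icc {M m B s k : ℝ} (hm : 0 < m) (hm1 : m ≤ 1) (hB1 : 1 ≤ B)
    (hM : M ∈ Set.Icc m B) (hs : s ∈ Set.Icc k 0) :
    M ^ s ∈ Set.Icc (B ^ k) (m ^ k) := by
  constructor
  · calc B ^ k ≤ B ^ s := Real.rpow_le_rpow_of_exponent_le hB1 hs.1
      _ ≤ M ^ s := Real.rpow_le_rpow_of_nonpos (hm.trans_le hM.1) hM.2 hs.2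
  · calc M ^ s ≤ m ^ s := Real.rpow_le_rpow_of_nonpos hm hM.1 hs.2
      _ ≤ m ^ k := Real.rpow_le_rpow_of_exponent_ge hm hm1 hs.1

lemma lam_mem_Icc_of_isMax {V : Type} [Fintype V] [Nonempty V] (G : SimpleGraph V)
    [DecidableRel G.Adj] (μ : V → ℝ) (w : V → V → ℝ) (hμ : ∀ x, 0 < μ x)
    (hsym : ∀ x y, G.Adj x y → w x y = w y x) {g h : V → ℝ} (hg : ∀ x, 0 < g x)
    (hh : ∀ x, 0 < h x) {p α lam : ℝ} (hp : 1 ≤ p) (hα : 1 ≤ α) {u : V → ℝ} (hu : ∀ x, 0 < u x)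
    (hsol : ∀ x, -(plap G μ w p u x) + g x * u x ^ (p - 1) = lam * h x * u x ^ (α - 1))
    {x₀ : V} (hx₀ : ∀ x, u x ≤ u x₀) :
    lam ∈ Set.Icc ((univ.inf' univ_nonempty fun x => μ x * g x) / (∑ x, μ x * h x) * u x₀ ^ (p - α))
      ((∑ x, μ x * g x) / (univ.inf' univ_nonempty fun x => μ x * h x) * u x₀ ^ (p - α)) := by
  set A := ∑ x, μ x * g x * u x ^ (p - 1)
  set D := ∑ x, μ x * h x * u x ^ (α - 1)
  have hA : A ∈ Set.Icc _ _ := sum_mul_rpow_mem_Icc_of_isMax (fun x => μ x * g x) u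
    (fun x => (mul_pos (hμ x) (hg x)).le) (fun x => (hu x).le) hx₀ (sub_nonneg.2 hp)
  have hD : D ∈ Set.Icc _ _ := sum_mul_rpow_mem_Icc_of_isMax (fun x => μ x * h x) u
    (fun x => (mul_pos (hμ x) (hh x)).le) (fun x => (hu x).le) hx₀ (sub_nonneg.2 hα)
  have hAD : A = lam * D := by
    rw [mul_sum]
    calc A = ∑ x, (μ x * plap G μ w p u x + lam * (μ x * h x * u x ^ (α - 1))) :=
          sum_congr rfl fun x _ => by linear_combination μ x * hsol x
      _ = _ := by
        rw [sum_add_distrib, sum_mul_plap_eq_zero G μ w (fun x => (hμ x).ne') hsym, zero_add]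
  have hMp : 0 < u x₀ ^ (p - 1) := Real.rpow_pos_of_pos (hu x₀) _
  have hMα : 0 < u x₀ ^ (α - 1) := Real.rpow_pos_of_pos (hu x₀) _
  have hinf_g : 0 < univ.inf' univ_nonempty fun x => μ x * g x :=
    (lt_inf'_iff _).2 fun x _ => mul_pos (hμ x) (hg x)
  have hinf_h : 0 < univ.inf' univ_nonempty fun x => μ x * h x :=
    (lt_inf'_iff _).2 fun x _ => mul_pos (hμ x) (hh x)
  have hDpos : 0 < D := (mul_pos hinf_h hMα).trans_le hD.1
  have hlam : lam = A / D := by rw [hAD, mul_div_cancel_right₀ _ hDpos.ne']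
  have hpow : u x₀ ^ (p - α) = u x₀ ^ (p - 1) / u x₀ ^ (α - 1) := by
    rw [← Real.rpow_sub (hu x₀)]; ring_nf
  rw [hlam, hpow, div_mul_div_comm, div_mul_div_comm]
  have hA₀ : 0 ≤ A := (mul_pos hinf_g hMp).le.trans hA.1
  exact ⟨div_le_div₀ hA₀ hA.1 hDpos hD.2,
    div_le_div₀ (hA₀.trans hA.2) hA.2 (mul_pos hinf_h hMα) hD.1⟩

theorem lambda_uniform_bounds_general {V : Type} [Fintype V] [Nonempty V]
    (G : SimpleGraph V) [DecidableRel G.Adj]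
    (μ : V → ℝ) (w : V → V → ℝ) (hμ : ∀ x, 0 < μ x)
    (hsym : ∀ x y, G.Adj x y → w x y = w y x)
    (α : ℝ) (hα : 1 < α) (g h : V → ℝ) (hg : ∀ x, 0 < g x) (hh : ∀ x, 0 < h x) :
    ∃ c₁ c₂ : ℝ, 0 < c₂ ∧ c₂ ≤ 1 ∧ 1 ≤ c₁ ∧
      ∀ (p : ℝ), 1 < p → p < α → ∀ (lam : ℝ) (u : V → ℝ), (∀ x, 0 < u x) → 0 < lam →
        (∀ x, -(plap G μ w p u x) + g x * u x ^ (p - 1) = lam * h x * u x ^ (α - 1)) →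
        (∑ x, μ x * h x * u x ^ α = 1) →
        c₂ ≤ lam ∧ lam ≤ c₁ := by
  set a := univ.inf' univ_nonempty fun x => μ x * g x
  set d := univ.inf' univ_nonempty fun x => μ x * h x
  set S := ∑ x, μ x * h x
  set m := min 1 S⁻¹
  set B := max 1 d⁻¹
  have ha : 0 < a := (lt_inf'_iff _).2 fun x _ => mul_pos (hμ x) (hg x)
  have hd : 0 < d := (lt_inf'_iff _).2 fun x _ => mul_pos (hμ x) (hh x)
  have hS : 0 < S := sum_pos (fun x _ => mul_pos (hμ x) (hh x)) univ_nonempty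
  have hSg : 0 ≤ ∑ x, μ x * g x := sum_nonneg fun x _ => (mul_pos (hμ x) (hg x)).le
  have hm : 0 < m := lt_min one_pos (inv_pos.2 hS)
  refine ⟨max 1 ((∑ x, μ x * g x) / d * m ^ (1 - α)), min 1 (a / S * B ^ (1 - α)),
    lt_min one_pos (by positivity), min_le_left _ _, le_max_left _ _, ?_⟩
  intro p hp hpα lam u hu _ hsol hnorm
  obtain ⟨x₀, hx₀⟩ := Finite.exists_max u
  have hnorm₀ := sum_mul_rpow_mem_Icc_of_isMax (fun x => μ x * h x) u
    (fun x => (mul_pos (hμ x) (hh x)).le) (fun x => (hu x).le) hx₀ (zero_le_one.trans hα.le)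
  rw [hnorm] at hnorm₀
  have hMα : u x₀ ^ α ∈ Set.Icc S⁻¹ d⁻¹ := ⟨(inv_le_iff_one_le_mul₀' hS).2 hnorm₀.2,
    by rw [← one_div, le_div_iff₀' hd]; exact hnorm₀.1⟩
  have hM := mem_Icc_of_rpow_mem_Icc (hu x₀).le hα.le hMα
  have hpow := rpow_mem_Icc_of_mem_Icc hm (min_le_left _ _) (le_max_left _ _) hM
    (s := p - α) (k := 1 - α) ⟨by linarith, by linarith⟩
  have hlam := lam_mem_Icc_of_isMax G μ w hμ hsym hg hh hp.le hα.le hu hsol hx₀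
  constructor
  · exact (min_le_right _ _).trans ((mul_le_mul_of_nonneg_left hpow.1 (by positivity)).trans hlam.1)
  · exact (hlam.2.trans (mul_le_mul_of_nonneg_left hpow.2 (by positivity))).trans (le_max_right _ _)

theorem lambda_uniform_bounds {V : Type} [Fintype V] [Nonempty V]
    (G : SimpleGraph V) [DecidableRel G.Adj] (hconn : G.Connected)
    (μ : V → ℝ) (w : V → V → ℝ) (hμ : ∀ x, 0 < μ x)
    (hw : ∀ x y, G.Adj x y → 0 < w x y) (hsym : ∀ x y, G.Adj x y → w x y = w y x)
    (α : ℝ) (hα : 1 < α) (g h : V → ℝ) (hg : ∀ x, 0 < g x) (hh : ∀ x, 0 < h x) :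
    ∃ c₁ c₂ : ℝ, 0 < c₂ ∧ c₂ ≤ 1 ∧ 1 ≤ c₁ ∧
      ∀ (p : ℝ), 1 < p → p < α → ∀ (lam : ℝ) (u : V → ℝ), (∀ x, 0 < u x) → 0 < lam →
        (∀ x, -(plap G μ w p u x) + g x * u x ^ (p - 1) = lam * h x * u x ^ (α - 1)) →
        (∑ x, μ x * h x * u x ^ α = 1) →
        c₂ ≤ lam ∧ lam ≤ c₁ :=
  lambda_uniform_bounds_general G μ w hμ hsym α hα g h hg hh
end
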